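/- arXiv:1912.04881 — 3 statements merged into one kernel-verified Lean document; each statement's English description precedes it below -/
import Mathlib

section
/- For all t ≥ 0 and all indices 1 ≤ n, m ≤ N, the (n,m) entry of the matrix exponential e^{At} equals (1/N) · Σ_{k=0}^{N−1} γ_k^{n−m} e^{ω_k t}. -/
open Matrix Complex Finset

noncomputable section

/-- The N×N matrix with -1 on the diagonal and 1 on the (cyclic) superdiagonal. -/
def ringMat (N : ℕ) : Matrix (Fin N) (Fin N) ℝ :=
  fun n m => if (m : ℕ) = (n : ℕ) then -1 else if (m : ℕ) = ((n : ℕ) + 1) % N then 1 else 0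

/-- γ_k = e^{2πik/N} -/
def gam (N k : ℕ) : ℂ := Complex.exp (2 * Real.pi * Complex.I * k / N)

/-!
Write `A = P - 1` with `P` the cyclic shift. For every `N`-th root of unity `γ` the vector
`(γ ^ n)ₙ` is an eigenvector of `P` with eigenvalue `γ`, so the Fourier matrix `F = (γ_k ^ n)ₙₖ`
satisfies `A F = F diag(ω_k)`. Orthogonality of the roots of unity gives
`F⁻¹ = (N⁻¹ γ_k ^ (-m))ₖₘ`, hence `e^{At} = F diag(e^{ω_k t}) F⁻¹`, whose `(n, m)` entry is the
claimed sum. The real exponential is computed inside complex matrices, where `F` lives.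
-/

theorem Nat.add_one_mod_ne_self {N : ℕ} (hN : 2 ≤ N) {n : ℕ} (hn : n < N) : (n + 1) % N ≠ n := by
  rcases Nat.lt_or_ge (n + 1) N with h | h
  · rw [Nat.mod_eq_of_lt h]; omega
  · rw [show n + 1 = N by omega, Nat.mod_self]; omega

section RootsOfUnity

variable {K : Type*} [Field K] {ζ : K} {N : ℕ}

theorem IsPrimitiveRoot.sum_pow_zpow (hζ : IsPrimitiveRoot ζ N) (r : ℤ) :
    ∑ k ∈ range N, (ζ ^ r) ^ k = if (N : ℤ) ∣ r then (N : K) else 0 := by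
  split_ifs with hr
  · simp [(hζ.zpow_eq_one_iff_dvd r).mpr hr]
  · have hζr : (ζ ^ r) ^ N = 1 := by
      rw [← zpow_natCast, ← _root_.zpow_mul, mul_comm, _root_.zpow_mul, zpow_natCast,
        hζ.pow_eq_one, _root_.one_zpow]
    rw [geom_sum_eq (fun h => hr ((hζ.zpow_eq_one_iff_dvd r).mp h)), hζr, sub_self, zero_div]

variable (ζ N) in
def fourierMatrix : Matrix (Fin N) (Fin N) K := of fun n k => (ζ ^ (k : ℕ)) ^ (n : ℕ)

variable (ζ N) in
def invFourierMatrix : Matrix (Fin N) (Fin N) K :=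
  of fun k m => (N : K)⁻¹ * (ζ ^ (k : ℕ)) ^ (-(m : ℤ))

theorem fourierMatrix_mul_diagonal_mul_invFourierMatrix_apply (hζ : ζ ≠ 0) (e : ℕ → K)
    (n m : Fin N) :
    (fourierMatrix ζ N * diagonal (fun k : Fin N => e k) * invFourierMatrix ζ N) n m =
      (N : K)⁻¹ * ∑ k ∈ range N, (ζ ^ k) ^ ((n : ℤ) - m) * e k := by
  rw [mul_apply, mul_sum, ← Fin.sum_univ_eq_sum_range]
  refine sum_congr rfl fun k _ => ?_
  simp only [mul_diagonal, fourierMatrix, invFourierMatrix, of_apply]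
  rw [zpow_sub₀ (pow_ne_zero _ hζ), _root_.zpow_neg, zpow_natCast, zpow_natCast]
  ring

theorem IsPrimitiveRoot.fourierMatrix_mul_invFourierMatrix [NeZero N]
    (hζ : IsPrimitiveRoot ζ N) : fourierMatrix ζ N * invFourierMatrix ζ N = 1 := by
  have := hζ.neZero'
  ext n m
  have h := fourierMatrix_mul_diagonal_mul_invFourierMatrix_apply (hζ.ne_zero (NeZero.ne N))
    (fun _ => 1) n m
  simp only [diagonal_one, mul_one] at h
  simp_rw [h, ← zpow_natCast, ← _root_.zpow_mul, mul_comm _ ((n : ℤ) - m), _root_.zpow_mul,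
    zpow_natCast, hζ.sum_pow_zpow, one_apply]
  have hdvd : (N : ℤ) ∣ (n : ℤ) - m ↔ n = m := by
    rw [← Nat.modEq_iff_dvd]
    exact ⟨fun h => Fin.ext (h.eq_of_lt_of_lt m.2 n.2).symm, fun h => h ▸ rfl⟩
  simp only [hdvd]
  split_ifs
  exacts [inv_mul_cancel₀ (NeZero.ne _), mul_zero _]

end RootsOfUnity

theorem Matrix.map_ofReal_exp {ι : Type*} [Fintype ι] [DecidableEq ι] (A : Matrix ι ι ℝ) :
    (NormedSpace.exp A).map ofReal = NormedSpace.exp (A.map ofReal) := by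
  open scoped Matrix.Norms.Operator in
  exact NormedSpace.map_exp ofRealHom.mapMatrix (continuous_id.matrix_map continuous_ofReal) A

theorem Matrix.exp_smul_of_mul_eq_mul_diagonal {ι : Type*} [Fintype ι] [DecidableEq ι]
    {A U V : Matrix ι ι ℂ} {d : ι → ℂ} (hAU : A * U = U * diagonal d) (hUV : U * V = 1)
    (t : ℂ) :
    NormedSpace.exp (t • A) = U * diagonal (fun k => Complex.exp (t * d k)) * V := by
  have hA : t • A = U * diagonal (t • d) * V := by
    rw [diagonal_smul, mul_smul_comm, smul_mul_assoc, ← hAU, mul_assoc, hUV, mul_one]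
  have hconj : NormedSpace.exp (U * diagonal (t • d) * V) =
      U * NormedSpace.exp (diagonal (t • d)) * V :=
    Matrix.exp_units_conj ⟨U, V, hUV, mul_eq_one_comm.mp hUV⟩ _
  rw [hA, hconj, exp_diagonal]
  congr
  funext k
  simp [Complex.exp_eq_exp_ℂ]

theorem gam_eq_pow (N k : ℕ) : gam N k = gam N 1 ^ k := by
  rw [gam, gam, ← Complex.exp_nat_mul]
  ring_nf

theorem isPrimitiveRoot_gam_one {N : ℕ} (hN : N ≠ 0) : IsPrimitiveRoot (gam N 1) N := by
  simpa [gam] using Complex.isPrimitiveRoot_exp N hN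

section RingMat

variable {N : ℕ}

theorem ringMat_mulVec_apply (hN : 2 ≤ N) (v : Fin N → ℂ) (n : Fin N) :
    ((ringMat N).map ofReal *ᵥ v) n = v ⟨(n + 1) % N, Nat.mod_lt _ (by omega)⟩ - v n := by
  set s : Fin N := ⟨(n + 1) % N, Nat.mod_lt _ (by omega)⟩
  have hsn : (s : ℕ) ≠ n := Nat.add_one_mod_ne_self hN n.2
  have hterm (j : Fin N) : ((ringMat N n j : ℝ) : ℂ) * v j =
      (if j = s then v j else 0) - if j = n then v j else 0 := by
    simp only [ringMat, Fin.ext_iff]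
    split_ifs <;> simp_all
  simp only [mulVec, dotProduct, map_apply, hterm, sum_sub_distrib, sum_ite_eq', mem_univ, if_true]

theorem ringMat_mulVec_pow (hN : 2 ≤ N) {γ : ℂ} (hγ : γ ^ N = 1) :
    (ringMat N).map ofReal *ᵥ (fun j : Fin N => γ ^ (j : ℕ)) =
      (γ - 1) • fun j : Fin N => γ ^ (j : ℕ) := by
  funext n
  rw [ringMat_mulVec_apply hN, ← pow_eq_pow_mod _ hγ]
  simp only [Pi.smul_apply, smul_eq_mul]
  ring

theorem ringMat_mul_fourierMatrix (hN : 2 ≤ N) {ζ : ℂ} (hζ : ζ ^ N = 1) :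
    (ringMat N).map ofReal * fourierMatrix ζ N =
      fourierMatrix ζ N * diagonal fun k : Fin N => ζ ^ (k : ℕ) - 1 := by
  ext n k
  have hζk : (ζ ^ (k : ℕ)) ^ N = 1 := by rw [← pow_mul, mul_comm, pow_mul, hζ, one_pow]
  rw [mul_apply', mul_diagonal, mul_comm]
  exact congrFun (ringMat_mulVec_pow hN hζk) n

end RingMat

/-- for all t ≥ 0 and indices n, m, the (n,m) entry of e^{At} equals
(1/N) Σ_{k=0}^{N-1} γ_k^{n-m} e^{ω_k t} with ω_k = γ_k - 1. -/
theorem stmt1 (N : ℕ) (hN : 2 ≤ N) :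
    ∀ t : ℝ, 0 ≤ t → ∀ n m : Fin N,
      ((NormedSpace.exp (t • ringMat N)) n m : ℂ) =
        (N : ℂ)⁻¹ * ∑ k ∈ Finset.range N,
          gam N k ^ ((n : ℤ) - (m : ℤ)) * Complex.exp ((gam N k - 1) * t) := by
  intro t _ n m
  have : NeZero N := ⟨by omega⟩
  have hζ := isPrimitiveRoot_gam_one (N := N) (NeZero.ne N)
  have hdiag := Matrix.exp_smul_of_mul_eq_mul_diagonal (ringMat_mul_fourierMatrix hN hζ.pow_eq_one)
    hζ.fourierMatrix_mul_invFourierMatrix t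
  have hreal : (t • ringMat N).map ofReal = (t : ℂ) • (ringMat N).map ofReal := by
    ext; simp
  rw [← map_apply (f := ofReal), Matrix.map_ofReal_exp, hreal, hdiag,
    fourierMatrix_mul_diagonal_mul_invFourierMatrix_apply (hζ.ne_zero (NeZero.ne N))
      (fun k => Complex.exp (t * (gam N 1 ^ k - 1)))]
  refine congrArg _ (sum_congr rfl fun k _ => ?_)
  rw [gam_eq_pow N k, mul_comm (t : ℂ)]
end
end

section
/- For every y ∈ ℝ^N and every t ≥ 0, ‖ e^{At} y − ȳ·(1,…,1)^⊤ ‖ ≤ √N · ‖y‖ · e^{−2 sin²(π/N) t}, where ȳ = (1/N) Σ_{k=1}^{N} y_k and ‖·‖ denotes the Euclidean norm on ℝ^N. -/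
open Matrix Complex Finset

noncomputable section

/-!
Indexed by `ZMod N`, the matrix is `S - 1` with `S` the cyclic shift `(S v) i = v (i + 1)`. The
discrete Fourier transform diagonalises `S`: shifting multiplies the `j`-th Fourier coefficient by
`ψ j = exp (2πij/N)` (`ZMod.stdAddChar`), so `e^{t(S-1)}` multiplies it by `exp (t (ψ j - 1))`,
of modulus `exp (-t (1 - cos (2πj/N))) ≤ exp (-2 sin²(π/N) t)` for `j ≠ 0`. The flow fixes the
mean, and removing the mean kills the coefficient at `j = 0`, so by Parseval
`‖e^{tA} y - ȳ‖ ≤ exp (-2 sin²(π/N) t) ‖y - ȳ‖ ≤ exp (-2 sin²(π/N) t) ‖y‖`; finally `1 ≤ √N`.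
-/

open scoped Nat ComplexConjugate

namespace Matrix

variable {ι κ 𝕜 : Type*} [Fintype ι] [DecidableEq ι] [Fintype κ] [DecidableEq κ] [RCLike 𝕜]

theorem hasSum_exp_mulVec (M : Matrix ι ι 𝕜) (v : ι → 𝕜) :
    HasSum (fun k => (k !⁻¹ : 𝕜) • (M ^ k *ᵥ v)) (NormedSpace.exp M *ᵥ v) := by
  open scoped Norms.Operator in
  have : CompleteSpace (Matrix ι ι 𝕜) := FiniteDimensional.complete 𝕜 _
  let L : Matrix ι ι 𝕜 →L[𝕜] ι → 𝕜 :=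
    (LinearMap.applyₗ v ∘ₗ Matrix.toLin'.toLinearMap).toContinuousLinearMap
  exact (NormedSpace.exp_series_hasSum_exp' (𝕂 := 𝕜) M).mapL L
    |>.congr_fun fun k => by simp only [L, map_smul]; rfl

theorem exp_mulVec_of_mulVec_eq_zero {M : Matrix ι ι 𝕜} {v : ι → 𝕜} (h : M *ᵥ v = 0) :
    NormedSpace.exp M *ᵥ v = v := by
  refine (hasSum_exp_mulVec M v).unique (hasSum_single 0 fun k hk => ?_) |>.trans (by simp)
  obtain ⟨k, rfl⟩ := Nat.exists_eq_succ_of_ne_zero hk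
  rw [pow_succ, ← mulVec_mulVec, h, mulVec_zero, smul_zero]

theorem exp_submatrix_equiv_self (e : κ ≃ ι) (M : Matrix ι ι 𝕜) :
    NormedSpace.exp (M.submatrix e e) = (NormedSpace.exp M).submatrix e e := by
  open scoped Norms.Operator in
  have : CompleteSpace (Matrix ι ι 𝕜) := FiniteDimensional.complete 𝕜 _
  exact (NormedSpace.map_exp (reindexAlgEquiv 𝕜 𝕜 e.symm)
    (continuous_id.matrix_submatrix _ _) M).symm

theorem exp_sub_smul_one (M : Matrix ι ι ℝ) (s : ℝ) :
    NormedSpace.exp (M - s • 1) = Real.exp (-s) • NormedSpace.exp M := by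
  have hscalar : NormedSpace.exp ((-s) • 1 : Matrix ι ι ℝ) = Real.exp (-s) • 1 := by
    open scoped Norms.Operator in
    rw [← Algebra.algebraMap_eq_smul_one, ← Algebra.algebraMap_eq_smul_one, Real.exp_eq_exp_ℝ]
    exact (NormedSpace.algebraMap_exp_comm (-s)).symm
  rw [sub_eq_add_neg, ← neg_smul, exp_add_of_commute _ _ ((Commute.one_right M).smul_right _),
    hscalar, mul_smul_one]

end Matrix

theorem sum_sub_mean_sq_le {ι : Type*} [Fintype ι] [Nonempty ι] (y : ι → ℝ) :
    ∑ i, (y i - (Fintype.card ι : ℝ)⁻¹ * ∑ k, y k) ^ 2 ≤ ∑ i, y i ^ 2 := by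
  have hn : (Fintype.card ι : ℝ) ≠ 0 := Nat.cast_ne_zero.mpr Fintype.card_ne_zero
  have hvar : ∑ i, (y i - (Fintype.card ι : ℝ)⁻¹ * ∑ k, y k) ^ 2 =
      ∑ i, y i ^ 2 - (Fintype.card ι : ℝ)⁻¹ * (∑ k, y k) ^ 2 := by
    simp only [sub_sq, sum_add_distrib, sum_sub_distrib, ← sum_mul, ← mul_sum, sum_const,
      card_univ, nsmul_eq_mul]
    field_simp
    ring
  rw [hvar]
  have : 0 ≤ (Fintype.card ι : ℝ)⁻¹ * (∑ k, y k) ^ 2 := by positivity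
  linarith

namespace ZMod

open Real

variable {N : ℕ} [NeZero N]

theorem dft_comp_add_right (Φ : ZMod N → ℂ) (c k : ZMod N) :
    𝓕 (fun i => Φ (i + c)) k = stdAddChar (c * k) * 𝓕 Φ k := by
  simp only [dft_apply, smul_eq_mul, mul_sum]
  refine Fintype.sum_equiv (Equiv.addRight c) _ _ fun i => ?_
  rw [Equiv.coe_addRight, ← mul_assoc, ← AddChar.map_add_eq_mul]
  congr 2
  ring

theorem dft_eq_cexp_mul_of_hasSum {Φ u : ZMod N → ℂ} {t : ℝ}
    (h : ∀ i, HasSum (fun k : ℕ => (t ^ k / k ! : ℂ) * Φ (i + (k : ZMod N))) (u i)) (j : ZMod N) :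
    𝓕 u j = Complex.exp (t * stdAddChar j) * 𝓕 Φ j := by
  have hdft : HasSum (fun k : ℕ => (t ^ k / k ! : ℂ) * 𝓕 (fun i => Φ (i + (k : ZMod N))) j)
      (𝓕 u j) := by
    simp only [dft_apply, smul_eq_mul, mul_sum]
    exact hasSum_sum fun i _ => ((h i).mul_left _).congr_fun fun k => by ring
  have hexp := (NormedSpace.expSeries_div_hasSum_exp ((t : ℂ) * stdAddChar j)).mul_right (𝓕 Φ j)
  rw [← Complex.exp_eq_exp_ℂ] at hexp
  refine hdft.unique (hexp.congr_fun fun k => ?_)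
  rw [dft_comp_add_right, ← nsmul_eq_mul, AddChar.map_nsmul_eq_pow]
  ring

theorem sum_norm_sq_dft (Φ : ZMod N → ℂ) : ∑ j, ‖𝓕 Φ j‖ ^ 2 = N * ∑ i, ‖Φ i‖ ^ 2 := by
  have hinv (i : ZMod N) : ∑ j, stdAddChar (j * i) * 𝓕 Φ j = N * Φ i := by
    have h := invDFT_apply (𝓕 Φ) i
    rw [LinearEquiv.symm_apply_apply, smul_eq_mul] at h
    simp only [h, smul_eq_mul, mul_inv_cancel_left₀ (NeZero.ne (N : ℂ))]
  apply Complex.ofReal_injective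
  push_cast
  calc ∑ j, (‖𝓕 Φ j‖ : ℂ) ^ 2 = ∑ j, ∑ i, Φ i * conj (stdAddChar (j * i) * 𝓕 Φ j) := by
        refine sum_congr rfl fun j _ => ?_
        rw [← Complex.mul_conj', dft_apply, sum_mul]
        refine sum_congr rfl fun i _ => ?_
        rw [map_mul, ← AddChar.map_neg_eq_conj, mul_comm j i, smul_eq_mul]
        ring
    _ = ∑ i, Φ i * conj (∑ j, stdAddChar (j * i) * 𝓕 Φ j) := by
        rw [sum_comm]
        simp only [map_sum, mul_sum]
    _ = N * ∑ i, (‖Φ i‖ : ℂ) ^ 2 := by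
        simp only [hinv, map_mul, Complex.conj_natCast, mul_sum, ← Complex.mul_conj']
        refine sum_congr rfl fun i _ => ?_
        ring

theorem sum_norm_sq_le_of_dft_eq_mul {u v m : ZMod N → ℂ} {c : ℝ}
    (huv : ∀ j, 𝓕 u j = m j * 𝓕 v j) (hm : ∀ j ≠ 0, ‖m j‖ ≤ c) (hv : ∑ i, v i = 0) :
    ∑ i, ‖u i‖ ^ 2 ≤ c ^ 2 * ∑ i, ‖v i‖ ^ 2 := by
  refine le_of_mul_le_mul_left ?_ (Nat.cast_pos.mpr (NeZero.pos N) : (0 : ℝ) < N)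
  calc (N : ℝ) * ∑ i, ‖u i‖ ^ 2 = ∑ j, ‖𝓕 u j‖ ^ 2 := (sum_norm_sq_dft u).symm
    _ ≤ ∑ j, c ^ 2 * ‖𝓕 v j‖ ^ 2 := sum_le_sum fun j _ => by
        rcases eq_or_ne j 0 with rfl | hj
        · simp [huv, dft_apply_zero, hv]
        · rw [huv, norm_mul, mul_pow]
          gcongr
          exact hm j hj
    _ = N * (c ^ 2 * ∑ i, ‖v i‖ ^ 2) := by rw [← mul_sum, sum_norm_sq_dft]; ring

theorem re_stdAddChar_le {j : ZMod N} (hj : j ≠ 0) :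
    (stdAddChar j).re ≤ 1 - 2 * Real.sin (π / N) ^ 2 := by
  have hN : (0 : ℝ) < N := Nat.cast_pos.mpr (NeZero.pos N)
  have hv1 : (1 : ℝ) ≤ j.val := by
    exact_mod_cast Nat.one_le_iff_ne_zero.mpr ((ZMod.val_ne_zero j).mpr hj)
  have hvN : (j.val : ℝ) + 1 ≤ N := by exact_mod_cast j.val_lt
  have hre : (stdAddChar j).re = Real.cos (2 * π * j.val / N) := by
    rw [stdAddChar_apply, toCircle_apply,
      show 2 * π * I * j.val / N = ((2 * π * j.val / N : ℝ) : ℂ) * I by push_cast; ring,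
      Complex.exp_ofReal_mul_I_re]
  -- `cos (2πv/N) - cos (2π/N) = -2 sin (π(v+1)/N) sin (π(v-1)/N)`, both sines being `≥ 0`
  rw [hre, ← Real.cos_two_mul_eq_one_sub, ← sub_nonpos, Real.cos_sub_cos,
    show (2 * π * j.val / N + 2 * (π / N)) / 2 = π * ((j.val + 1) / N) by ring,
    show (2 * π * j.val / N - 2 * (π / N)) / 2 = π * ((j.val - 1) / N) by ring]
  have hsin {x : ℝ} (hx0 : 0 ≤ x) (hxN : x ≤ N) : 0 ≤ Real.sin (π * (x / N)) :=
    sin_nonneg_of_nonneg_of_le_pi (by positivity)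
      (mul_le_of_le_one_right pi_pos.le ((div_le_one hN).mpr hxN))
  nlinarith [mul_nonneg (hsin (x := j.val + 1) (by positivity) hvN)
    (hsin (x := j.val - 1) (by linarith) (by linarith))]

theorem norm_cexp_mul_stdAddChar_sub_one_le {t : ℝ} (ht : 0 ≤ t) {j : ZMod N} (hj : j ≠ 0) :
    ‖Complex.exp (t * (stdAddChar j - 1))‖ ≤ Real.exp (-(2 * Real.sin (π / N) ^ 2) * t) := by
  rw [Complex.norm_exp, Real.exp_le_exp]
  simp only [mul_re, ofReal_re, ofReal_im, sub_re, one_re, sub_im, one_im, zero_mul, sub_zero]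
  nlinarith [re_stdAddChar_le hj]

end ZMod

open ZMod Real

def cycleShift (N : ℕ) : Matrix (ZMod N) (ZMod N) ℝ :=
  Matrix.of fun i j => if j = i + 1 then 1 else 0

section CycleShift

variable {N : ℕ} [NeZero N]

theorem cycleShift_mulVec (v : ZMod N → ℝ) : cycleShift N *ᵥ v = fun i => v (i + 1) := by
  ext i
  simp [cycleShift, mulVec, dotProduct]

theorem cycleShift_pow_mulVec (k : ℕ) (v : ZMod N → ℝ) :
    cycleShift N ^ k *ᵥ v = fun i => v (i + k) := by
  induction k generalizing v with
  | zero => simp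
  | succ k ih =>
    rw [pow_succ, ← mulVec_mulVec, cycleShift_mulVec, ih]
    ext i
    push_cast
    rw [add_assoc]

theorem hasSum_exp_smul_cycleShift_mulVec (t : ℝ) (v : ZMod N → ℝ) (i : ZMod N) :
    HasSum (fun k : ℕ => t ^ k / k ! * v (i + k))
      ((NormedSpace.exp (t • cycleShift N) *ᵥ v) i) := by
  refine (Pi.hasSum.mp (hasSum_exp_mulVec (t • cycleShift N) v) i).congr_fun fun k => ?_
  simp only [smul_pow, smul_mulVec, cycleShift_pow_mulVec, Pi.smul_apply, smul_eq_mul]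
  ring

theorem dft_exp_smul_cycleShift_sub_one_mulVec (t : ℝ) (v : ZMod N → ℝ) (j : ZMod N) :
    𝓕 (fun i => ((NormedSpace.exp (t • (cycleShift N - 1)) *ᵥ v) i : ℂ)) j =
      Complex.exp (t * (stdAddChar j - 1)) * 𝓕 (fun i => (v i : ℂ)) j := by
  have h (i : ZMod N) : HasSum (fun k : ℕ => t ^ k / k ! * (Real.exp (-t) * v (i + k)))
      ((NormedSpace.exp (t • (cycleShift N - 1)) *ᵥ v) i) := by
    rw [smul_sub, exp_sub_smul_one, smul_mulVec, Pi.smul_apply, smul_eq_mul]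
    exact ((hasSum_exp_smul_cycleShift_mulVec t v i).mul_left (Real.exp (-t))).congr_fun
      fun k => by ring
  have hc (i : ZMod N) :
      HasSum (fun k : ℕ => (t ^ k / k ! : ℂ) * ((Real.exp (-t) * v (i + k) : ℝ) : ℂ))
        ((NormedSpace.exp (t • (cycleShift N - 1)) *ᵥ v) i : ℂ) :=
    ((h i).mapL ofRealCLM).congr_fun fun k => by simp
  rw [dft_eq_cexp_mul_of_hasSum (Φ := fun i => ((Real.exp (-t) * v i : ℝ) : ℂ)) hc]
  simp only [ofReal_mul, dft_const_mul, ofReal_exp, ofReal_neg, ← mul_assoc, ← Complex.exp_add]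
  ring_nf

theorem sum_sq_exp_smul_cycleShift_sub_one_mulVec_le {t : ℝ} (ht : 0 ≤ t) {v : ZMod N → ℝ}
    (hv : ∑ i, v i = 0) :
    ∑ i, ((NormedSpace.exp (t • (cycleShift N - 1)) *ᵥ v) i) ^ 2 ≤
      Real.exp (-(2 * Real.sin (π / N) ^ 2) * t) ^ 2 * ∑ i, v i ^ 2 := by
  simpa only [Complex.norm_real, Real.norm_eq_abs, sq_abs] using
    sum_norm_sq_le_of_dft_eq_mul (dft_exp_smul_cycleShift_sub_one_mulVec t v)
      (fun j hj => norm_cexp_mul_stdAddChar_sub_one_le ht hj) (by exact_mod_cast hv)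

theorem sqrt_sum_sq_exp_smul_cycleShift_sub_one_mulVec_sub_mean_le {t : ℝ} (ht : 0 ≤ t)
    (y : ZMod N → ℝ) :
    √(∑ i, ((NormedSpace.exp (t • (cycleShift N - 1)) *ᵥ y) i - (N : ℝ)⁻¹ * ∑ k, y k) ^ 2) ≤
      Real.exp (-(2 * Real.sin (π / N) ^ 2) * t) * √(∑ i, y i ^ 2) := by
  set ybar := (N : ℝ)⁻¹ * ∑ k, y k
  have hfix : NormedSpace.exp (t • (cycleShift N - 1)) *ᵥ (fun _ => ybar) = fun _ => ybar :=
    exp_mulVec_of_mulVec_eq_zero (by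
      rw [smul_mulVec, sub_mulVec, cycleShift_mulVec, one_mulVec, sub_self, smul_zero])
  have hcentered : ∑ i, (y - fun _ => ybar : ZMod N → ℝ) i = 0 := by
    have hN : (N : ℝ) ≠ 0 := NeZero.ne _
    simp only [Pi.sub_apply, sum_sub_distrib, sum_const, card_univ, ZMod.card, nsmul_eq_mul, ybar]
    field_simp
    ring
  have hdecay := sum_sq_exp_smul_cycleShift_sub_one_mulVec_le ht hcentered
  rw [mulVec_sub, hfix] at hdecay
  simp only [Pi.sub_apply] at hdecay
  have hvar := sum_sub_mean_sq_le y
  rw [ZMod.card] at hvar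
  calc _ ≤ √(Real.exp (-(2 * Real.sin (π / N) ^ 2) * t) ^ 2 * ∑ i, y i ^ 2) :=
        Real.sqrt_le_sqrt (hdecay.trans (mul_le_mul_of_nonneg_left hvar (sq_nonneg _)))
    _ = _ := by rw [Real.sqrt_mul (sq_nonneg _), Real.sqrt_sq (Real.exp_pos _).le]

end CycleShift

theorem ZMod.finEquiv_apply {N : ℕ} [NeZero N] (a : Fin N) : ZMod.finEquiv N a = a.val := by
  obtain ⟨n, rfl⟩ := Nat.exists_eq_succ_of_ne_zero (NeZero.ne N)
  exact (Fin.cast_val_eq_self a).symm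

theorem ringMat_eq_submatrix {N : ℕ} [NeZero N] (hN : 2 ≤ N) :
    ringMat N = (cycleShift N - 1).submatrix (ZMod.finEquiv N) (ZMod.finEquiv N) := by
  ext n m
  have hsucc : m.val = (n.val + 1) % N ↔ finEquiv N m = finEquiv N n + 1 := by
    rw [finEquiv_apply, finEquiv_apply, ← Nat.cast_succ, ZMod.natCast_eq_natCast_iff',
      Nat.mod_eq_of_lt m.isLt]
  have hone : (1 : ZMod N) ≠ 0 := fun h => by rw [ZMod.one_eq_zero_iff] at h; omega
  rcases eq_or_ne m n with rfl | hmn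
  · simp [ringMat, cycleShift, hone]
  · simp [ringMat, cycleShift, hsucc, Fin.val_ne_of_ne hmn, hmn.symm]

/-- for every y ∈ ℝ^N and t ≥ 0,
‖e^{At} y − ȳ·(1,…,1)ᵀ‖ ≤ √N ‖y‖ e^{−2 sin²(π/N) t}, Euclidean norms. -/
theorem stmt2 (N : ℕ) (hN : 2 ≤ N) :
    ∀ y : Fin N → ℝ, ∀ t : ℝ, 0 ≤ t →
      Real.sqrt (∑ i, ((NormedSpace.exp (t • ringMat N)).mulVec y i
          - (N : ℝ)⁻¹ * ∑ k, y k) ^ 2) ≤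
        Real.sqrt N * Real.sqrt (∑ i, (y i) ^ 2) *
          Real.exp (-(2 * Real.sin (Real.pi / N) ^ 2) * t) := by
  intro y t ht
  have : NeZero N := ⟨by omega⟩
  obtain ⟨e, he⟩ : ∃ e : Fin N ≃ ZMod N, ringMat N = (cycleShift N - 1).submatrix e e :=
    ⟨_, ringMat_eq_submatrix hN⟩
  have hflow : NormedSpace.exp (t • ringMat N) *ᵥ y =
      (NormedSpace.exp (t • (cycleShift N - 1)) *ᵥ (y ∘ e.symm)) ∘ e := by
    rw [he, show t • (cycleShift N - 1).submatrix e e = (t • (cycleShift N - 1)).submatrix e e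
      from rfl, exp_submatrix_equiv_self, submatrix_mulVec_equiv]
  have hmean : ∑ k, (y ∘ e.symm) k = ∑ k, y k := e.symm.sum_comp y
  have hnorm : ∑ k, (y ∘ e.symm) k ^ 2 = ∑ k, y k ^ 2 := e.symm.sum_comp (y · ^ 2)
  have hN1 : 1 ≤ √(N : ℝ) := Real.one_le_sqrt.mpr (by exact_mod_cast NeZero.one_le)
  calc _ = √(∑ j, ((NormedSpace.exp (t • (cycleShift N - 1)) *ᵥ (y ∘ e.symm)) j
          - (N : ℝ)⁻¹ * ∑ k, (y ∘ e.symm) k) ^ 2) := by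
        rw [hflow, hmean]
        exact congrArg _ (Fintype.sum_equiv e _ _ fun _ => rfl)
    _ ≤ Real.exp (-(2 * Real.sin (π / N) ^ 2) * t) * √(∑ k, (y ∘ e.symm) k ^ 2) :=
        sqrt_sum_sq_exp_smul_cycleShift_sub_one_mulVec_sub_mean_le ht _
    _ ≤ _ := by
        rw [hnorm, mul_comm]
        exact mul_le_mul_of_nonneg_right (le_mul_of_one_le_left (Real.sqrt_nonneg _) hN1)
          (Real.exp_pos _).le
end
end

section
/- For all indices 1 ≤ n, m ≤ N, the (n,m) entry of e^{At} converges to 1/N as t → ∞. -/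
/-!
Over `ℂ` the matrix is `P - 1`, where `P` is the permutation matrix of the cyclic rotation. For a
primitive `N`-th root of unity `ζ`, the Vandermonde (discrete Fourier) matrix `V i j = ζ ^ (i * j)`
diagonalises `P` with eigenvalues `ζ ^ j`, so `e^{tA} = V diag(e^{t (ζ ^ j - 1)}) V⁻¹`. For `j ≠ 0`
the exponent has negative real part, hence `e^{tA} → V E₀₀ V⁻¹`. Column `0` of `V` is constant and
the other columns of `V` sum to zero, so row `0` of `V⁻¹` is `(1/N, …, 1/N)`.
-/

open Matrix Complex Finset Filter

noncomputable section

theorem Fin.val_finRotate {N : ℕ} (i : Fin N) : (finRotate N i : ℕ) = (i + 1) % N := by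
  rcases N with _ | N
  · exact i.elim0
  · rw [finRotate_apply, Fin.val_add, Fin.val_one', Nat.add_mod_mod]

theorem sum_pow_fin_eq_zero {R : Type*} [Field R] {c : R} {N : ℕ} (hcN : c ^ N = 1)
    (hc : c ≠ 1) : ∑ i : Fin N, c ^ (i : ℕ) = 0 := by
  rw [Fin.sum_univ_eq_sum_range (c ^ ·), geom_sum_eq hc, hcN, sub_self, zero_div]

namespace Complex

theorem re_sub_one_of_norm_eq_one {z : ℂ} (hz : ‖z‖ = 1) : (z - 1).re = -‖z - 1‖ ^ 2 / 2 := by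
  have h := Complex.sq_norm z
  rw [hz] at h
  simp only [Complex.sq_norm, normSq_apply, sub_re, sub_im, one_re, one_im] at h ⊢
  linarith

theorem sub_one_eq_zero_or_re_neg {z : ℂ} (hz : ‖z‖ = 1) : z - 1 = 0 ∨ (z - 1).re < 0 := by
  rw [or_iff_not_imp_left, re_sub_one_of_norm_eq_one hz]
  intro h
  have := norm_pos_iff.mpr h
  nlinarith

theorem tendsto_exp_ofReal_mul {w : ℂ} (hw : w = 0 ∨ w.re < 0) :
    Tendsto (fun t : ℝ => exp (t * w)) atTop (nhds (if w = 0 then 1 else 0)) := by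
  rcases hw with rfl | hw
  · simp
  · rw [if_neg (ne_of_apply_ne re (by simpa using hw.ne))]
    refine tendsto_exp_comap_re_atBot.comp (tendsto_comap_iff.mpr ?_)
    simpa [Function.comp_def] using tendsto_id.atTop_mul_const_of_neg hw

end Complex

namespace Matrix

variable {m : Type*} [Fintype m] [DecidableEq m]

theorem map_ofReal_exp_s3 (M : Matrix m m ℝ) :
    (NormedSpace.exp M).map ofReal = NormedSpace.exp (M.map ofReal) := by
  let : NormedRing (Matrix m m ℝ) := Matrix.linftyOpNormedRing
  let : NormedRing (Matrix m m ℂ) := Matrix.linftyOpNormedRing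
  -- the `ℝ`-algebra structure gives completeness, through finite-dimensionality
  let : NormedAlgebra ℝ (Matrix m m ℝ) := Matrix.linftyOpNormedAlgebra
  let : NormedAlgebra ℚ (Matrix m m ℝ) := Matrix.linftyOpNormedAlgebra
  let : NormedAlgebra ℚ (Matrix m m ℂ) := Matrix.linftyOpNormedAlgebra
  exact NormedSpace.map_exp ofRealHom.mapMatrix (continuous_id.matrix_map continuous_ofReal) M

theorem tendsto_exp_smul_diagonal {d : m → ℂ} (hd : ∀ i, d i = 0 ∨ (d i).re < 0) :
    Tendsto (fun t : ℝ => NormedSpace.exp (t • diagonal d)) atTop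
      (nhds (diagonal fun i => if d i = 0 then 1 else 0)) := by
  simp_rw [← diagonal_smul, exp_diagonal, Pi.exp_def, ← Complex.exp_eq_exp_ℂ]
  refine (continuous_id.matrix_diagonal).tendsto _ |>.comp (tendsto_pi_nhds.mpr fun i => ?_)
  exact tendsto_exp_ofReal_mul (hd i)

theorem tendsto_exp_smul_of_mul_eq_mul_diagonal {A U : Matrix m m ℂ} {d : m → ℂ}
    (hU : IsUnit U) (hAU : A * U = U * diagonal d) (hd : ∀ i, d i = 0 ∨ (d i).re < 0) :
    Tendsto (fun t : ℝ => NormedSpace.exp (t • A)) atTop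
      (nhds (U * diagonal (fun i => if d i = 0 then 1 else 0) * U⁻¹)) := by
  have hA : A = U * diagonal d * U⁻¹ := by
    rw [← hAU, Matrix.mul_assoc, mul_nonsing_inv _ ((isUnit_iff_isUnit_det U).mp hU), mul_one]
  have hexp (t : ℝ) :
      NormedSpace.exp (t • A) = U * NormedSpace.exp (t • diagonal d) * U⁻¹ := by
    rw [← exp_conj _ _ hU, hA, Matrix.mul_smul, Matrix.smul_mul]
  simp_rw [hexp]
  exact ((continuous_const.matrix_mul continuous_id).matrix_mul continuous_const).tendsto _
    |>.comp (tendsto_exp_smul_diagonal hd)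

end Matrix

section

variable {N : ℕ}

theorem permMatrix_finRotate_mul_vandermonde {R : Type*} [CommRing R] {ζ : R} (hζ : ζ ^ N = 1) :
    (finRotate N).permMatrix R * vandermonde (fun i : Fin N => ζ ^ (i : ℕ)) =
      vandermonde (fun i : Fin N => ζ ^ (i : ℕ)) * diagonal fun j : Fin N => ζ ^ (j : ℕ) := by
  ext i j
  rw [PEquiv.toMatrix_toPEquiv_mul, mul_diagonal, submatrix_apply, vandermonde_apply,
    vandermonde_apply, id, Fin.val_finRotate, ← pow_eq_pow_mod _ hζ]
  ring

theorem isUnit_vandermonde_pow {R : Type*} [Field R] {ζ : R} (hζ : IsPrimitiveRoot ζ N) :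
    IsUnit (vandermonde fun i : Fin N => ζ ^ (i : ℕ)) := by
  rw [isUnit_iff_isUnit_det, isUnit_iff_ne_zero, det_vandermonde_ne_zero_iff]
  exact fun i j h => Fin.ext (hζ.pow_inj i.isLt j.isLt h)

theorem sum_vandermonde_pow {R : Type*} [Field R] {ζ : R} (hζ : IsPrimitiveRoot ζ N)
    (j : Fin N) :
    ∑ i, vandermonde (fun i : Fin N => ζ ^ (i : ℕ)) i j = if (j : ℕ) = 0 then (N : R) else 0 := by
  simp_rw [vandermonde_apply, ← pow_mul, mul_comm _ (j : ℕ), pow_mul]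
  split_ifs with hj
  · simp [hj]
  · exact sum_pow_fin_eq_zero (by rw [← pow_mul, mul_comm, pow_mul, hζ.pow_eq_one, one_pow])
      (hζ.pow_ne_one_of_pos_of_lt hj j.isLt)

theorem vandermonde_pow_mul_diagonal_mul_inv {ζ : ℂ} (hζ : IsPrimitiveRoot ζ N) :
    vandermonde (fun i : Fin N => ζ ^ (i : ℕ)) *
        diagonal (fun j : Fin N => if ζ ^ (j : ℕ) - 1 = 0 then 1 else 0) *
        (vandermonde fun i : Fin N => ζ ^ (i : ℕ))⁻¹ = of fun _ _ => (N : ℂ)⁻¹ := by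
  have hE (j : Fin N) : ζ ^ (j : ℕ) - 1 = 0 ↔ (j : ℕ) = 0 := by
    rw [sub_eq_zero, hζ.pow_eq_one_iff_dvd]
    exact ⟨fun h => Nat.eq_zero_of_dvd_of_lt h j.isLt, fun h => h ▸ dvd_zero N⟩
  have hLV : (of fun _ _ => (N : ℂ)⁻¹) * vandermonde (fun i : Fin N => ζ ^ (i : ℕ)) =
      vandermonde (fun i : Fin N => ζ ^ (i : ℕ)) *
        diagonal (fun j : Fin N => if ζ ^ (j : ℕ) - 1 = 0 then 1 else 0) := by
    ext i j
    rw [mul_diagonal, mul_apply]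
    simp only [of_apply, ← mul_sum]
    rw [sum_vandermonde_pow hζ, vandermonde_apply]
    simp only [hE]
    split_ifs with hj
    · simp [hj, (Fin.pos j).ne']
    · simp
  rw [← hLV, mul_nonsing_inv_cancel_right _ _
    ((isUnit_iff_isUnit_det _).mp (isUnit_vandermonde_pow hζ))]

theorem ringMat_map_ofReal (hN : 2 ≤ N) :
    (ringMat N).map ofReal = (finRotate N).permMatrix ℂ - 1 := by
  ext i j
  have hne : ((i : ℕ) + 1) % N ≠ i := by
    rcases Nat.lt_or_ge ((i : ℕ) + 1) N with h | h
    · rw [Nat.mod_eq_of_lt h]; omega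
    · rw [show (i : ℕ) + 1 = N by omega, Nat.mod_self]; omega
  rw [Matrix.sub_apply, map_apply, one_apply, Equiv.Perm.permMatrix, PEquiv.toMatrix_apply,
    Equiv.toPEquiv_apply]
  simp only [Option.mem_def, Option.some_inj, Fin.ext_iff, Fin.val_finRotate, ringMat]
  split_ifs <;> first | omega | simp

theorem ringMat_map_ofReal_mul_vandermonde (hN : 2 ≤ N) {ζ : ℂ} (hζ : ζ ^ N = 1) :
    (ringMat N).map ofReal * vandermonde (fun i : Fin N => ζ ^ (i : ℕ)) =
      vandermonde (fun i : Fin N => ζ ^ (i : ℕ)) * diagonal fun j : Fin N => ζ ^ (j : ℕ) - 1 := by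
  rw [ringMat_map_ofReal hN, Matrix.sub_mul, permMatrix_finRotate_mul_vandermonde hζ,
    Matrix.one_mul, ← diagonal_sub, Matrix.mul_sub, diagonal_one, Matrix.mul_one]

theorem tendsto_exp_smul_ringMat (hN : 2 ≤ N) :
    Tendsto (fun t : ℝ => (NormedSpace.exp (t • ringMat N)).map ofReal) atTop
      (nhds (of fun _ _ => (N : ℂ)⁻¹)) := by
  have hζ := Complex.isPrimitiveRoot_exp N (by omega)
  have hlim := tendsto_exp_smul_of_mul_eq_mul_diagonal (isUnit_vandermonde_pow hζ)
    (ringMat_map_ofReal_mul_vandermonde hN hζ.pow_eq_one)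
    fun j => sub_one_eq_zero_or_re_neg (by rw [norm_pow, hζ.norm'_eq_one (by omega), one_pow])
  rw [vandermonde_pow_mul_diagonal_mul_inv hζ] at hlim
  refine hlim.congr fun t => ?_
  rw [map_ofReal_exp_s3]
  congr 1
  ext i j
  simp

end

/-- each (n,m) entry of e^{At} converges to 1/N as t → ∞. -/
theorem stmt3 (N : ℕ) (hN : 2 ≤ N) :
    ∀ n m : Fin N,
      Tendsto (fun t : ℝ => (NormedSpace.exp (t • ringMat N)) n m)
        atTop (nhds ((N : ℝ)⁻¹)) := by
  intro n m
  have := ((continuous_re.comp (continuous_id.matrix_elem n m)).tendsto _).comp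
    (tendsto_exp_smul_ringMat hN)
  simpa [Function.comp_def] using this
end
end
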